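/- For X ~ N(μ, 1/s) with s > 0 and any x > 0, P(X ≥ μ + x) ≥ √(2/π) · exp(−s·x²/2) / (√s·x + √(s·x² + 4)). -/

import Mathlib

/-!
Let `r = √(u² + 4)` and `F(u) = √(2/π) · e^{-u²/2} / (u + r)`. Then `F(u) → 0` as `u → ∞`, and
`-F'(u) = √(2/π) · e^{-u²/2} (u r + 1) / (r (u + r))`, which for `u ≥ 0` is nonnegative and at most
the standard normal density `e^{-u²/2} / √(2π)`; the upper bound, after clearing denominators,
is `u r ≤ u² + 2 = (u² + r²) / 2`, i.e. AM–GM. Integrating, `F(u) = ∫_u^∞ -F' ≤ P(Z ≥ u)` for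
`Z ~ N(0, 1)`, and `Z = √s (X - μ)` turns this into the bound with `u = √s x`.
-/

open MeasureTheory ProbabilityTheory Set Real Filter Topology

theorem le_setIntegral_Ioi_of_hasDerivAt {F F' f : ℝ → ℝ} {a : ℝ}
    (hderiv : ∀ x ∈ Ici a, HasDerivAt F (F' x) x) (hF'_nonpos : ∀ x ∈ Ioi a, F' x ≤ 0)
    (hF'_le : ∀ x ∈ Ioi a, -F' x ≤ f x) (hf : IntegrableOn f (Ioi a))
    (hF : Tendsto F atTop (𝓝 0)) : F a ≤ ∫ x in Ioi a, f x := by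
  have hint := integrableOn_Ioi_deriv_of_nonpos' hderiv hF'_nonpos hF
  calc F a = ∫ x in Ioi a, -F' x := by
        rw [integral_neg, integral_Ioi_of_hasDerivAt_of_nonpos' hderiv hF'_nonpos hF]; ring
    _ ≤ ∫ x in Ioi a, f x := setIntegral_mono_on hint.neg hf measurableSet_Ioi hF'_le

lemma gaussianReal_map_standardize {v : NNReal} (hv : v ≠ 0) (μ : ℝ) :
    (gaussianReal μ v).map (fun y => (y - μ) / √v) = gaussianReal 0 1 := by
  have : (fun y : ℝ => (y - μ) / √v) = (· / √(v : ℝ)) ∘ (· - μ) := rfl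
  rw [this, ← Measure.map_map (by fun_prop) (by fun_prop), gaussianReal_map_sub_const,
    gaussianReal_map_div_const, sub_self, zero_div]
  congr
  ext
  simp [hv]

lemma gaussianReal_Ici_add {v : NNReal} (hv : v ≠ 0) (μ x : ℝ) :
    gaussianReal μ v (Ici (μ + x)) = gaussianReal 0 1 (Ici (x / √v)) := by
  have hsqrt : 0 < √(v : ℝ) := sqrt_pos.2 (by positivity)
  rw [← gaussianReal_map_standardize hv μ, Measure.map_apply (by fun_prop) measurableSet_Ici]
  congr 1
  ext y
  simp [div_le_div_iff_of_pos_right hsqrt, le_sub_iff_add_le']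

noncomputable def tailMinorant (u : ℝ) : ℝ := exp (-u ^ 2 / 2) / (u + √(u ^ 2 + 4))

lemma add_sqrt_sq_add_four_pos (u : ℝ) : 0 < u + √(u ^ 2 + 4) := by
  have : |u| < √(u ^ 2 + 4) := by
    rw [← sqrt_sq_eq_abs]
    exact sqrt_lt_sqrt (sq_nonneg u) (by linarith)
  linarith [neg_abs_le u]

lemma hasDerivAt_tailMinorant (u : ℝ) :
    HasDerivAt tailMinorant
      (-(exp (-u ^ 2 / 2) * (u * √(u ^ 2 + 4) + 1) / (√(u ^ 2 + 4) * (u + √(u ^ 2 + 4))))) u := by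
  have hsum := add_sqrt_sq_add_four_pos u
  have hexp : HasDerivAt (fun u : ℝ => exp (-u ^ 2 / 2)) (exp (-u ^ 2 / 2) * (-u)) u := by
    refine HasDerivAt.exp ((((hasDerivAt_pow 2 u).neg).div_const 2).congr_deriv ?_)
    ring
  have hden : HasDerivAt (fun u : ℝ => u + √(u ^ 2 + 4)) (1 + u / √(u ^ 2 + 4)) u := by
    refine ((hasDerivAt_id' u).add
      (((hasDerivAt_pow 2 u).add_const 4).sqrt (by positivity))).congr_deriv ?_
    field_simp
    ring
  refine (hexp.div hden hsum.ne').congr_deriv ?_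
  field_simp
  ring

lemma neg_deriv_tailMinorant_le (u : ℝ) :
    exp (-u ^ 2 / 2) * (u * √(u ^ 2 + 4) + 1) / (√(u ^ 2 + 4) * (u + √(u ^ 2 + 4)))
      ≤ exp (-u ^ 2 / 2) / 2 := by
  have hr2 : √(u ^ 2 + 4) ^ 2 = u ^ 2 + 4 := sq_sqrt (by positivity)
  have hden := add_sqrt_sq_add_four_pos u
  rw [mul_div_assoc, div_eq_mul_one_div (exp _)]
  refine mul_le_mul_of_nonneg_left ?_ (exp_pos _).le
  rw [div_le_div_iff₀ (by positivity) two_pos]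
  nlinarith [sq_nonneg (u - √(u ^ 2 + 4))]

lemma tendsto_tailMinorant_atTop : Tendsto tailMinorant atTop (𝓝 0) := by
  have hexp : Tendsto (fun u : ℝ => exp (-u ^ 2 / 2)) atTop (𝓝 0) := by
    refine tendsto_exp_comp_nhds_zero.2 ?_
    simp_rw [neg_div]
    exact tendsto_neg_atTop_atBot.comp ((tendsto_pow_atTop two_ne_zero).atTop_div_const two_pos)
  refine hexp.div_atTop (tendsto_atTop_mono (fun u => ?_) tendsto_id)
  simp only [id, le_add_iff_nonneg_right, sqrt_nonneg]

lemma sqrt_two_div_pi_div_two : √(2 / π) / 2 = (√(2 * π))⁻¹ := by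
  rw [show 2 / π = 2 ^ 2 / (2 * π) by field_simp, sqrt_div' _ (by positivity),
    sqrt_sq two_pos.le]
  field_simp

lemma ofReal_tailMinorant_le_gaussianReal_Ici {u : ℝ} (hu : 0 ≤ u) :
    ENNReal.ofReal (√(2 / π) * tailMinorant u) ≤ gaussianReal 0 1 (Ici u) := by
  rw [gaussianReal_apply_eq_integral 0 one_ne_zero, integral_Ici_eq_integral_Ioi]
  refine ENNReal.ofReal_le_ofReal (le_setIntegral_Ioi_of_hasDerivAt
    (fun y _ => (hasDerivAt_tailMinorant y).const_mul _) (fun y hy => ?_) (fun y _ => ?_)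
    (integrable_gaussianPDFReal 0 1).integrableOn
    (by simpa using tendsto_tailMinorant_atTop.const_mul (√(2 / π))))
  · have hy : 0 ≤ y := hu.trans hy.le
    simp only [mul_neg, neg_nonpos]
    positivity
  · calc -(√(2 / π) * -_) = √(2 / π) * _ := by ring
      _ ≤ √(2 / π) * (exp (-y ^ 2 / 2) / 2) :=
        mul_le_mul_of_nonneg_left (neg_deriv_tailMinorant_le y) (sqrt_nonneg _)
      _ = gaussianPDFReal 0 1 y := by
        simp only [gaussianPDFReal, NNReal.coe_one, mul_one, sub_zero,
          ← sqrt_two_div_pi_div_two]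
        ring

/-- Gaussian lower tail bound (Abramowitz–Stegun): for `X ~ N(μ, 1/s)` and `x > 0`,
`P(X ≥ μ + x) ≥ √(2/π) · exp(-s x²/2) / (√s x + √(s x² + 4))`. -/
theorem gaussian_tail_lower_bound (μ x s : ℝ) (hs : 0 < s) (hx : 0 < x) :
    ENNReal.ofReal
        (Real.sqrt (2 / π) * Real.exp (-s * x ^ 2 / 2)
          / (Real.sqrt s * x + Real.sqrt (s * x ^ 2 + 4)))
      ≤ (gaussianReal μ (Real.toNNReal (1 / s))) (Set.Ici (μ + x)) := by
  have hv : Real.toNNReal (1 / s) ≠ 0 := by simpa using hs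
  have hscale : x / √(Real.toNNReal (1 / s) : ℝ) = √s * x := by
    rw [Real.coe_toNNReal _ (by positivity), sqrt_div' _ hs.le, sqrt_one]
    field_simp
  rw [gaussianReal_Ici_add hv, hscale]
  convert ofReal_tailMinorant_le_gaussianReal_Ici (u := √s * x) (by positivity) using 2
  rw [tailMinorant, mul_pow, sq_sqrt hs.le, mul_div_assoc, neg_mul]
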